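/- One has ∑_{k ≥ 1} ∑_{l ≥ 1} B(k, l)/(k + l) = ζ(2) = π²/6, where B(α, β) = ∫₀¹ u^{α−1} (1−u)^{β−1} du is the beta function and the double series converges. -/
import Mathlib

open scoped Nat
open Finset

lemma prod_aux (k l : ℕ) : k ! * ∏ j ∈ Finset.range (l + 1), (k + 1 + j) = (k + l + 1)! := by
  induction l with
  | zero => simp [Nat.factorial_succ, mul_comm]
  | succ l ih =>
    rw [Finset.prod_range_succ, ← mul_assoc, ih]
    have : k + (l + 1) + 1 = (k + l + 1) + 1 := by ring
    rw [this, Nat.factorial_succ (k + l + 1)]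
    ring

/-- The Euler beta function `B(α, β) = ∫₀¹ u^(α-1) (1-u)^(β-1) du`; here
`betaNat k l = B(k + 1, l + 1) = ∫₀¹ u^k (1-u)^l du`. -/
noncomputable def betaNat (k l : ℕ) : ℝ :=
  ∫ u in (0:ℝ)..1, u ^ k * (1 - u) ^ l

lemma betaNat_eq (k l : ℕ) : betaNat k l = (k ! : ℝ) * l ! / (k + l + 1)! := by
  have hu : 0 < Complex.re ((k : ℂ) + 1) := by
    simp only [Complex.add_re, Complex.natCast_re, Complex.one_re]
    positivity
  have h := Complex.betaIntegral_eval_nat_add_one_right hu l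
  have h2 : Complex.betaIntegral ((k : ℂ) + 1) ((l : ℂ) + 1) = (betaNat k l : ℂ) := by
    rw [Complex.betaIntegral, betaNat, ← intervalIntegral.integral_ofReal]
    refine intervalIntegral.integral_congr fun x _ => ?_
    rw [add_sub_cancel_right, add_sub_cancel_right, Complex.cpow_natCast, Complex.cpow_natCast]
    push_cast
    ring
  rw [h2] at h
  have h3 : ((∏ j ∈ Finset.range (l + 1), (k + 1 + j) : ℕ) : ℂ)
      = ∏ j ∈ Finset.range (l + 1), ((k : ℂ) + 1 + (j : ℂ)) := by push_cast; rfl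
  have hP : (0 : ℕ) < ∏ j ∈ Finset.range (l + 1), (k + 1 + j) :=
    Finset.prod_pos fun j _ => by positivity
  have h' : betaNat k l = (l ! : ℝ) / ((∏ j ∈ Finset.range (l + 1), (k + 1 + j) : ℕ) : ℝ) := by
    exact Complex.ofReal_injective (by push_cast; exact h)
  rw [h', ← prod_aux k l]
  push_cast
  rw [div_eq_div_iff (by positivity) (by positivity)]
  ring

noncomputable def dAux (k l : ℕ) : ℝ := (k ! : ℝ) * l ! / ((k + l + 1)! * (k + 1))

lemma f_eq (k l : ℕ) :
    betaNat k l / ((k + l + 2 : ℕ) : ℝ) = dAux k l - dAux k (l + 1) := by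
  rw [betaNat_eq, dAux, dAux]
  have h1 : (k + (l + 1) + 1)! = (k + l + 2) * (k + l + 1)! := by
    have : k + (l + 1) + 1 = (k + l + 1) + 1 := by ring
    rw [this, Nat.factorial_succ]
  rw [h1, Nat.factorial_succ l]
  have hkl : (0 : ℝ) < ((k + l + 1)! : ℝ) := by positivity
  push_cast
  field_simp
  ring

lemma dAux_nonneg (k l : ℕ) : 0 ≤ dAux k l := by unfold dAux; positivity

lemma dAux_tendsto (k : ℕ) :
    Filter.Tendsto (fun l => dAux k l) Filter.atTop (nhds 0) := by
  have hb : ∀ l : ℕ, dAux k l ≤ (k ! : ℝ) * (1 / (l + 1)) := by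
    intro l
    have h1 : ((l + 1)! : ℝ) * 1 ≤ ((k + l + 1)! : ℝ) * (k + 1) := by
      have := Nat.factorial_le (show l + 1 ≤ k + l + 1 by omega)
      have hk0 : (0 : ℝ) ≤ (k : ℝ) := by positivity
      have h2 : (1 : ℝ) ≤ (k : ℝ) + 1 := by linarith
      have h3 : ((l + 1)! : ℝ) ≤ ((k + l + 1)! : ℝ) := by exact_mod_cast this
      have hfl : (0 : ℝ) < ((l + 1)! : ℝ) := by positivity
      nlinarith
    have h4 : dAux k l ≤ (k ! : ℝ) * l ! / ((l + 1)! * 1) := by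
      unfold dAux
      apply div_le_div_of_nonneg_left _ (by positivity) h1
      positivity
    refine h4.trans (le_of_eq ?_)
    rw [Nat.factorial_succ l]
    have hl : (0 : ℝ) < (l ! : ℝ) := by positivity
    push_cast
    field_simp
  refine squeeze_zero (fun l => dAux_nonneg k l) hb ?_
  have := tendsto_one_div_add_atTop_nhds_zero_nat.const_mul (k ! : ℝ)
  simpa using this

lemma row_hasSum (k : ℕ) :
    HasSum (fun l => betaNat k l / ((k + l + 2 : ℕ) : ℝ)) (1 / ((k : ℝ) + 1) ^ 2) := by
  have hnn : ∀ l, 0 ≤ betaNat k l / ((k + l + 2 : ℕ) : ℝ) := by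
    intro l
    rw [betaNat_eq]
    positivity
  rw [hasSum_iff_tendsto_nat_of_nonneg hnn]
  have hsum : ∀ n, ∑ l ∈ Finset.range n, betaNat k l / ((k + l + 2 : ℕ) : ℝ)
      = dAux k 0 - dAux k n := by
    intro n
    rw [← Finset.sum_range_sub' (dAux k) n]
    exact Finset.sum_congr rfl fun l _ => f_eq k l
  have h0 : dAux k 0 = 1 / ((k : ℝ) + 1) ^ 2 := by
    unfold dAux
    rw [add_zero, Nat.factorial_succ]
    push_cast
    have : (0 : ℝ) < (k ! : ℝ) := by positivity
    field_simp
    ring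
  simp_rw [hsum, h0]
  have h := Filter.Tendsto.const_sub (1 / ((k : ℝ) + 1) ^ 2) (dAux_tendsto k)
  rw [sub_zero] at h
  exact h

lemma shifted_basel : HasSum (fun k : ℕ => 1 / ((k : ℝ) + 1) ^ 2) (Real.pi ^ 2 / 6) := by
  have h := hasSum_zeta_two
  rw [← hasSum_nat_add_iff' 1] at h
  simpa using h

theorem beta_double_sum_eq_zeta_two :
    Summable (fun kl : ℕ × ℕ =>
      betaNat kl.1 kl.2 / ((kl.1 + kl.2 + 2 : ℕ) : ℝ)) ∧
    ∑' kl : ℕ × ℕ, betaNat kl.1 kl.2 / ((kl.1 + kl.2 + 2 : ℕ) : ℝ) =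
      Real.pi ^ 2 / 6 := by
  have hnn : 0 ≤ fun kl : ℕ × ℕ => betaNat kl.1 kl.2 / ((kl.1 + kl.2 + 2 : ℕ) : ℝ) := by
    intro kl
    simp only [betaNat_eq]
    positivity
  have hs : Summable (fun kl : ℕ × ℕ => betaNat kl.1 kl.2 / ((kl.1 + kl.2 + 2 : ℕ) : ℝ)) := by
    refine (summable_prod_of_nonneg hnn).mpr ⟨fun k => (row_hasSum k).summable, ?_⟩
    apply Summable.congr shifted_basel.summable
    intro k
    exact ((row_hasSum k).tsum_eq).symm
  refine ⟨hs, ?_⟩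
  rw [Summable.tsum_prod hs]
  calc ∑' (k : ℕ) (l : ℕ), betaNat k l / ((k + l + 2 : ℕ) : ℝ)
      = ∑' k : ℕ, 1 / ((k : ℝ) + 1) ^ 2 := by
        exact tsum_congr fun k => (row_hasSum k).tsum_eq
    _ = Real.pi ^ 2 / 6 := shifted_basel.tsum_eq
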